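/- Let K₁, K₂ be invertible real 3×3 matrices, R a real 3×3 matrix, t, n ∈ ℝ³, and h ≠ 0. Let H = K₂ (R + (1/h) t nᵀ) K₁⁻¹ be the plane-induced homography and F = K₂⁻ᵀ ⌊t⌋ₓ R K₁⁻¹ the fundamental matrix. Then Hᵀ F is skew-symmetric: (Hᵀ F)ᵀ = −(Hᵀ F). -/

import Mathlib

open Matrix

/-- The skew-symmetric matrix `⌊a⌋ₓ` of a vector `a ∈ ℝ³`, so that `⌊a⌋ₓ v = a × v`. -/
def skew3 (a : Fin 3 → ℝ) : Matrix (Fin 3) (Fin 3) ℝ :=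
  !![0, -a 2, a 1; a 2, 0, -a 0; -a 1, a 0, 0]

/-! After cancelling `K₂ᵀ` against `K₂⁻ᵀ`, the plane term `h⁻¹ n tᵀ` of `Hᵀ` meets `⌊t⌋ₓ` and
vanishes because `tᵀ ⌊t⌋ₓ = -(t × t)ᵀ = 0`. What is left is the congruence
`(R K₁⁻¹)ᵀ ⌊t⌋ₓ (R K₁⁻¹)` of a skew-symmetric matrix, which is again skew-symmetric. -/

lemma skew3_transpose (a : Fin 3 → ℝ) : (skew3 a)ᵀ = -skew3 a := by
  ext i j
  fin_cases i <;> fin_cases j <;> simp [skew3]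

lemma vecMul_skew3_self (a : Fin 3 → ℝ) : a ᵥ* skew3 a = 0 := by
  ext j
  fin_cases j <;> simp [skew3, vecMul, dotProduct, Fin.sum_univ_three] <;> ring

lemma vecMulVec_mul_skew3_self (b a : Fin 3 → ℝ) : vecMulVec b a * skew3 a = 0 := by
  rw [vecMulVec_mul, vecMul_skew3_self, vecMulVec_zero]

lemma transpose_mul_mul_eq_neg_of_transpose_eq_neg {m n R : Type*} [Fintype m]
    [CommRing R] {S : Matrix m m R} (hS : Sᵀ = -S) (A : Matrix m n R) :
    (Aᵀ * S * A)ᵀ = -(Aᵀ * S * A) := by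
  simp only [transpose_mul, transpose_transpose, hS, Matrix.mul_neg, Matrix.neg_mul,
    Matrix.mul_assoc]

theorem homography_fundamental_skew_general
    (K₁ K₂ : Matrix (Fin 3) (Fin 3) ℝ) (hK₂ : IsUnit K₂.det)
    (R : Matrix (Fin 3) (Fin 3) ℝ) (t n : Fin 3 → ℝ) (h : ℝ)
    (H : Matrix (Fin 3) (Fin 3) ℝ) (hH : H = K₂ * (R + h⁻¹ • vecMulVec t n) * K₁⁻¹)
    (F : Matrix (Fin 3) (Fin 3) ℝ) (hF : F = (K₂ᵀ)⁻¹ * skew3 t * R * K₁⁻¹) :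
    (Hᵀ * F)ᵀ = -(Hᵀ * F) := by
  have hK₂_cancel : K₂ᵀ * (K₂ᵀ)⁻¹ = 1 := mul_nonsing_inv _ (by rwa [det_transpose])
  have hH_transpose : Hᵀ = (K₁⁻¹)ᵀ * (Rᵀ + h⁻¹ • vecMulVec n t) * K₂ᵀ := by
    simp only [hH, transpose_mul, transpose_add, transpose_smul, transpose_vecMulVec,
      Matrix.mul_assoc]
  have hplane : (Rᵀ + h⁻¹ • vecMulVec n t) * skew3 t = Rᵀ * skew3 t := by
    rw [Matrix.add_mul, Matrix.smul_mul, vecMulVec_mul_skew3_self, smul_zero, add_zero]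
  have hcongr : Hᵀ * F = (R * K₁⁻¹)ᵀ * skew3 t * (R * K₁⁻¹) := by
    calc Hᵀ * F
        = (K₁⁻¹)ᵀ * ((Rᵀ + h⁻¹ • vecMulVec n t) * (K₂ᵀ * (K₂ᵀ)⁻¹) * skew3 t) *
            (R * K₁⁻¹) := by
          simp only [hH_transpose, hF, Matrix.mul_assoc]
      _ = (R * K₁⁻¹)ᵀ * skew3 t * (R * K₁⁻¹) := by
          rw [hK₂_cancel, Matrix.mul_one, hplane, transpose_mul]
          simp only [Matrix.mul_assoc]
  rw [hcongr]
  exact transpose_mul_mul_eq_neg_of_transpose_eq_neg (skew3_transpose t) _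

/-- For the plane-induced homography `H = K₂ (R + (1/h) t nᵀ) K₁⁻¹` and the fundamental
matrix `F = K₂⁻ᵀ ⌊t⌋ₓ R K₁⁻¹`, the product `Hᵀ F` is skew-symmetric. -/
theorem homography_fundamental_skew
    (K₁ K₂ : Matrix (Fin 3) (Fin 3) ℝ) (hK₁ : IsUnit K₁.det) (hK₂ : IsUnit K₂.det)
    (R : Matrix (Fin 3) (Fin 3) ℝ) (t n : Fin 3 → ℝ) (h : ℝ) (hh : h ≠ 0)
    (H : Matrix (Fin 3) (Fin 3) ℝ) (hH : H = K₂ * (R + h⁻¹ • vecMulVec t n) * K₁⁻¹)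
    (F : Matrix (Fin 3) (Fin 3) ℝ) (hF : F = (K₂ᵀ)⁻¹ * skew3 t * R * K₁⁻¹) :
    (Hᵀ * F)ᵀ = -(Hᵀ * F) :=
  homography_fundamental_skew_general K₁ K₂ hK₂ R t n h H hH F hF
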